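/- Let f be nondecreasing and satisfy (H1), (H2) and (H3). There exist C > 0 and ε₀ > 0, independent of ρ, such that for every ρ > 1, every ε ∈ (0, ε₀), and every truncated maximizer ζ^{ε,ρ} as in the context: E_{ε,ρ}(ζ^{ε,ρ}) ≥ (κ²/(4π))·log(1/ε) − C. -/

import Mathlib

open MeasureTheory Real Filter
open scoped ENNReal Topology

noncomputable section

abbrev Pt : Type := EuclideanSpace ℝ (Fin 2)

/-- The point (a, b) in the plane. -/
def pt (a b : ℝ) : Pt := WithLp.toLp 2 ![a, b]

/-- The open right half plane Π. -/
def halfPlane : Set Pt := {x | 0 < x 0}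

/-- Reflection across the x₂-axis: x ↦ x̄. -/
def reflect (x : Pt) : Pt := pt (-(x 0)) (x 1)

/-- Reflection across the x₁-axis. -/
def flip2 (x : Pt) : Pt := pt (x 0) (-(x 1))

/-- Green's function of -Δ in the half plane with zero Dirichlet data. -/
def G (x y : Pt) : ℝ := (1 / (2 * π)) * Real.log (dist (reflect x) y / dist x y)

/-- Green's operator. -/
def Gop (ζ : Pt → ℝ) (x : Pt) : ℝ := ∫ y in halfPlane, G x y * ζ y

/-- The rectangle D. -/
def Dset (r : ℝ) : Set Pt := {x | r/2 < x 0 ∧ x 0 < 2*r ∧ -1 < x 1 ∧ x 1 < 1}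

/-- The admissible class A. -/
structure InA (r κ : ℝ) (ζ : Pt → ℝ) : Prop where
  measurable : Measurable ζ
  essBdd : ∃ M : ℝ, ∀ᵐ x ∂(volume : Measure Pt), |ζ x| ≤ M
  nonneg : ∀ᵐ x ∂(volume : Measure Pt), 0 ≤ ζ x
  mass_le : (∫ x in halfPlane, ζ x) ≤ κ
  support_ae : ∀ᵐ x ∂(volume : Measure Pt), x ∉ Dset r → ζ x = 0

/-- F(s) = ∫₀ˢ f(t) dt. -/
def Fint (f : ℝ → ℝ) (s : ℝ) : ℝ := ∫ t in (0:ℝ)..s, f t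

/-- The convex conjugate J of F, with values in [0, +∞] (note J ≥ 0 since F(0) = 0). -/
def Jconj (f : ℝ → ℝ) (s : ℝ) : ℝ≥0∞ := ⨆ t : ℝ, ENNReal.ofReal (s * t - Fint f t)

/-- The energy functional E_ε, with values in [-∞, +∞). -/
def energy (f : ℝ → ℝ) (r W ε : ℝ) (ζ : Pt → ℝ) : EReal :=
  (((1/2) * (∫ x in Dset r, ζ x * Gop ζ x) - W * ∫ x in Dset r, (x 0) * ζ x : ℝ) : EReal)
  - ((ENNReal.ofReal (ε⁻¹ ^ 2) * ∫⁻ x in Dset r, Jconj f (ε^2 * ζ x) : ℝ≥0∞) : EReal)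

/-- Steiner symmetry with respect to the line x₂ = 0. -/
def SteinerSym (ζ : Pt → ℝ) : Prop :=
  (∀ᵐ x ∂(volume : Measure Pt), ζ (flip2 x) = ζ x) ∧
  (∀ᵐ x₁ ∂(volume : Measure ℝ), ∃ g : ℝ → ℝ,
      (∀ᵐ x₂ ∂(volume : Measure ℝ), ζ (pt x₁ x₂) = g x₂) ∧
      ∀ s t : ℝ, |s| ≤ |t| → g t ≤ g s)

/-- Hypothesis (H1). -/
def H1 (f : ℝ → ℝ) : Prop := (∀ s ≤ 0, f s = 0) ∧ ∀ s, 0 < s → 0 < f s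

/-- ζ is a maximizer of E_ε over A. -/
def IsMaximizer (f : ℝ → ℝ) (r W κ ε : ℝ) (ζ : Pt → ℝ) : Prop :=
  InA r κ ζ ∧ ∀ ζ', InA r κ ζ' → energy f r W ε ζ' ≤ energy f r W ε ζ

/-- μ is a Lagrange multiplier for ζ. -/
def IsLM (f : ℝ → ℝ) (r W ε : ℝ) (ζ : Pt → ℝ) (μ : ℝ) : Prop :=
  0 ≤ μ ∧ ∀ᵐ x ∂(volume : Measure Pt), x ∈ Dset r →
    ζ x = ε⁻¹^2 * f (Gop ζ x - W * x 0 - μ)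

/-- The essential support of ζ. -/
def essSupport (ζ : Pt → ℝ) : Set Pt :=
  {x | ∀ U ∈ nhds x, volume {y ∈ U | ζ y ≠ 0} ≠ 0}

/-- The odd extension of ζ across the x₂-axis. -/
def oddExt (ζ : Pt → ℝ) (x : Pt) : ℝ :=
  if 0 < x 0 then ζ x else if x 0 < 0 then -(ζ (reflect x)) else 0

/-- The truncated nonlinearity f_ρ. -/
def ftr (f : ℝ → ℝ) (ρ : ℝ) (s : ℝ) : ℝ := min (f s) (f ρ)

/-- A (Steiner-symmetric) maximizer of the truncated energy E_{ε,ρ} over A, together with a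
Lagrange multiplier μ, solving the truncated equation on the half plane with total mass κ. -/
def IsTruncMax (f : ℝ → ℝ) (r W κ ε ρ : ℝ) (ζ : Pt → ℝ) (μ : ℝ) : Prop :=
  InA r κ ζ ∧ SteinerSym ζ ∧
  (∀ ζ', InA r κ ζ' → energy (ftr f ρ) r W ε ζ' ≤ energy (ftr f ρ) r W ε ζ) ∧
  0 ≤ μ ∧
  (∀ᵐ x ∂(volume : Measure Pt), x ∈ halfPlane →
     ζ x = ε⁻¹^2 * ftr f ρ (Gop ζ x - W * x 0 - μ)) ∧
  (∫ x in halfPlane, ζ x) = κ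

/-!
Compare `ζ` with the uniform patch `ζ' = (f 1 / ε²) · 𝟙_B`, where `B` is the disc of radius
`σ = ε s₀` about `(r, 0)` and `s₀` is chosen so that `ζ'` has mass `κ`. For `x, y ∈ B` the
Green function is at least `log (r / 2σ) / 2π`, so the self-interaction of `ζ'` contributes at
least `κ²/(4π) log (1/ε) - O(1)`; the impulse term is `O(1)`, and since `ε² ζ' = f_ρ 1` on `B` and
`J_ρ (f_ρ 1) ≤ f_ρ 1`, the penalisation term is at most `κ`. Maximality of `ζ` concludes.
-/

open Metric Set

theorem integrableOn_log_norm_ball {E : Type*} [NormedAddCommGroup E] [NormedSpace ℝ E]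
    [FiniteDimensional ℝ E] [MeasurableSpace E] [BorelSpace E] [Nontrivial E]
    (μ : Measure E) [μ.IsAddHaarMeasure] (R : ℝ) :
    IntegrableOn (fun y : E => log ‖y‖) (ball 0 R) μ := by
  rw [integrableOn_fun_norm_addHaar μ (f := log)]
  exact ((intervalIntegral.intervalIntegrable_log' (a := 0) (b := R)).continuousOn_mul
    (continuous_pow _).continuousOn).def'.mono_set (Ioo_subset_Ioc_self.trans Ioc_subset_uIoc)

theorem indicator_ball_comp_dist {E F : Type*} [NormedAddCommGroup E] [Zero F]
    (g : ℝ → F) (x : E) (R : ℝ) :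
    (ball x R).indicator (fun y => g (dist x y))
      = fun y => (ball 0 R).indicator (fun z => g ‖z‖) (y - x) := by
  ext y
  simp only [indicator, mem_ball_iff_norm, sub_zero, dist_comm x y, dist_eq_norm]

section Translation

variable {E F : Type*} [NormedAddCommGroup E] [MeasurableSpace E] [BorelSpace E]
  [NormedAddCommGroup F] (μ : Measure E) [μ.IsAddRightInvariant]

theorem integrableOn_ball_comp_dist {g : ℝ → F} {R : ℝ}
    (hg : IntegrableOn (fun y => g ‖y‖) (ball 0 R) μ) (x : E) :
    IntegrableOn (fun y => g (dist x y)) (ball x R) μ := by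
  rw [← integrable_indicator_iff measurableSet_ball, indicator_ball_comp_dist]
  exact ((integrable_indicator_iff measurableSet_ball).2 hg).comp_sub_right x

theorem setIntegral_ball_comp_dist [NormedSpace ℝ F] (g : ℝ → F) (x : E) (R : ℝ) :
    ∫ y in ball x R, g (dist x y) ∂μ = ∫ y in ball 0 R, g ‖y‖ ∂μ := by
  rw [← integral_indicator measurableSet_ball, indicator_ball_comp_dist,
    integral_sub_right_eq_self, integral_indicator measurableSet_ball]

end Translation

theorem coe_sub_le_coe_sub_coe_ennreal {a a' m : ℝ} {b : ℝ≥0∞} (hm : 0 ≤ m) (ha : a' ≤ a)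
    (hb : b ≤ ENNReal.ofReal m) : ((a' - m : ℝ) : EReal) ≤ (a : EReal) - (b : EReal) := by
  have hb' : (b : EReal) ≤ (m : EReal) := by
    simpa [EReal.coe_ennreal_ofReal, max_eq_left hm]
      using EReal.coe_ennreal_le_coe_ennreal_iff.2 hb
  rw [EReal.coe_sub]
  exact EReal.sub_le_sub (EReal.coe_le_coe_iff.2 ha) hb'

section Conjugate

variable {g : ℝ → ℝ}

theorem Monotone.nonneg_of_eq_zero_of_nonpos (hg : Monotone g) (hg0 : ∀ s ≤ 0, g s = 0) {s : ℝ}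
    (hs : 0 ≤ s) : 0 ≤ g s :=
  (hg0 0 le_rfl).symm.trans_le (hg hs)

theorem Fint_nonneg (hg : Monotone g) (hg0 : ∀ s ≤ 0, g s = 0) (t : ℝ) : 0 ≤ Fint g t := by
  rcases le_total 0 t with ht | ht
  · exact intervalIntegral.integral_nonneg ht fun s hs => hg.nonneg_of_eq_zero_of_nonpos hg0 hs.1
  · rw [Fint, intervalIntegral.integral_symm, intervalIntegral.integral_congr
      (g := fun _ => (0 : ℝ)) fun s hs => hg0 s (by rw [uIcc_of_le ht] at hs; exact hs.2)]
    simp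

theorem mul_sub_one_le_Fint (hg : Monotone g) (hg0 : ∀ s ≤ 0, g s = 0) (t : ℝ) :
    g 1 * (t - 1) ≤ Fint g t := by
  have hg1 : 0 ≤ g 1 := hg.nonneg_of_eq_zero_of_nonpos hg0 zero_le_one
  rcases le_total t 1 with ht | ht
  · nlinarith [Fint_nonneg hg hg0 t]
  have hint : ∀ a b : ℝ, IntervalIntegrable g volume a b := fun _ _ => hg.intervalIntegrable
  have htail : g 1 * (t - 1) ≤ ∫ s in (1 : ℝ)..t, g s := by
    simpa [mul_comm] using intervalIntegral.integral_mono_on ht intervalIntegrable_const (hint 1 t)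
      fun s hs => hg hs.1
  have hhead : 0 ≤ ∫ s in (0 : ℝ)..1, g s := Fint_nonneg hg hg0 1
  rw [Fint, ← intervalIntegral.integral_add_adjacent_intervals (hint 0 1) (hint 1 t)]
  linarith

theorem Jconj_zero (hg : Monotone g) (hg0 : ∀ s ≤ 0, g s = 0) : Jconj g 0 = 0 :=
  ENNReal.iSup_eq_zero.2 fun t => ENNReal.ofReal_eq_zero.2 (by
    linarith [Fint_nonneg hg hg0 t])

theorem Jconj_apply_one_le (hg : Monotone g) (hg0 : ∀ s ≤ 0, g s = 0) :
    Jconj g (g 1) ≤ ENNReal.ofReal (g 1) :=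
  iSup_le fun t => ENNReal.ofReal_le_ofReal (by linarith [mul_sub_one_le_Fint hg hg0 t])

end Conjugate

section Truncation

variable {f : ℝ → ℝ} {ρ : ℝ}

theorem ftr_monotone (hf : Monotone f) : Monotone (ftr f ρ) := hf.min monotone_const

theorem ftr_of_nonpos (hf1 : H1 f) (hρ : 0 < ρ) {s : ℝ} (hs : s ≤ 0) : ftr f ρ s = 0 := by
  rw [ftr, hf1.1 s hs, min_eq_left (hf1.2 ρ hρ).le]

theorem ftr_one (hf : Monotone f) (hρ : 1 ≤ ρ) : ftr f ρ 1 = f 1 := min_eq_left (hf hρ)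

end Truncation

section Plane

theorem abs_sub_le_dist (x y : Pt) (i : Fin 2) : |x i - y i| ≤ dist x y :=
  PiLp.dist_apply_le x y i

theorem dist_le_abs_add_abs (x y : Pt) : dist x y ≤ |x 0 - y 0| + |x 1 - y 1| := by
  rw [EuclideanSpace.dist_eq, Fin.sum_univ_two, Real.dist_eq, Real.dist_eq]
  refine Real.sqrt_le_iff.2 ⟨by positivity, ?_⟩
  nlinarith [sq_abs (x 0 - y 0), sq_abs (x 1 - y 1), abs_nonneg (x 0 - y 0),
    abs_nonneg (x 1 - y 1)]

theorem volume_ball_pt (x : Pt) {σ : ℝ} (hσ : 0 ≤ σ) :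
    volume (ball x σ) = ENNReal.ofReal (π * σ ^ 2) := by
  rw [EuclideanSpace.volume_ball_fin_two, ← ENNReal.ofReal_pow hσ,
    ← ENNReal.ofReal_mul (by positivity), mul_comm]

theorem measureReal_ball_pt (x : Pt) {σ : ℝ} (hσ : 0 ≤ σ) :
    volume.real (ball x σ) = π * σ ^ 2 := by
  rw [measureReal_def, volume_ball_pt x hσ, ENNReal.toReal_ofReal (by positivity)]

theorem continuous_reflect : Continuous reflect := by
  unfold reflect pt
  fun_prop

theorem measurable_G : Measurable fun p : Pt × Pt => G p.1 p.2 := by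
  have := continuous_reflect.measurable
  unfold G
  fun_prop

theorem measurableSet_halfPlane : MeasurableSet halfPlane :=
  (isOpen_lt continuous_const (by fun_prop : Continuous fun x : Pt => x 0)).measurableSet

theorem stronglyMeasurable_Gop {ζ : Pt → ℝ} (hζ : Measurable ζ) : StronglyMeasurable (Gop ζ) := by
  have h : Gop ζ = fun x => ∫ y, halfPlane.indicator (fun y => G x y * ζ y) y := by
    ext x
    rw [integral_indicator measurableSet_halfPlane]
    rfl
  rw [h]
  refine StronglyMeasurable.integral_prod_right' (f := fun p : Pt × Pt =>
    halfPlane.indicator (fun y => G p.1 y * ζ y) p.2) ?_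
  exact ((measurable_G.mul (hζ.comp measurable_snd)).indicator
    (measurable_snd measurableSet_halfPlane)).stronglyMeasurable

end Plane

section Disc

variable {r σ : ℝ} {x y : Pt}

theorem abs_sub_lt_of_mem_ball (hx : x ∈ ball (pt r 0) σ) : |x 0 - r| < σ ∧ |x 1| < σ :=
  ⟨(abs_sub_le_dist x (pt r 0) 0).trans_lt hx,
    by simpa [pt] using (abs_sub_le_dist x (pt r 0) 1).trans_lt hx⟩

theorem ball_subset_halfPlane (hσr : σ ≤ r) : ball (pt r 0) σ ⊆ halfPlane := by
  intro x hx
  have h0 := abs_lt.1 (abs_sub_lt_of_mem_ball hx).1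
  show 0 < x 0
  linarith

theorem ball_subset_Dset (hσr : σ ≤ r / 2) (hσ1 : σ ≤ 1) : ball (pt r 0) σ ⊆ Dset r := by
  intro x hx
  obtain ⟨h0, h1⟩ := abs_sub_lt_of_mem_ball hx
  rw [abs_lt] at h0 h1
  exact ⟨by linarith, by linarith, by linarith, by linarith⟩

theorem le_dist_reflect (hσr : σ ≤ r / 2) (hx : x ∈ ball (pt r 0) σ) (hy : y ∈ ball (pt r 0) σ) :
    r ≤ dist (reflect x) y := by
  have hx0 := abs_lt.1 (abs_sub_lt_of_mem_ball hx).1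
  have hy0 := abs_lt.1 (abs_sub_lt_of_mem_ball hy).1
  have h := abs_sub_le_dist (reflect x) y 0
  rw [show reflect x 0 = -x 0 from rfl, abs_of_neg (by linarith)] at h
  linarith

theorem dist_reflect_le (hσr : σ ≤ r / 4) (hx : x ∈ ball (pt r 0) σ) (hy : y ∈ ball (pt r 0) σ) :
    dist (reflect x) y ≤ 3 * r := by
  obtain ⟨hx0, hx1⟩ := abs_sub_lt_of_mem_ball hx
  obtain ⟨hy0, hy1⟩ := abs_sub_lt_of_mem_ball hy
  have h := dist_le_abs_add_abs (reflect x) y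
  rw [show reflect x 0 = -x 0 from rfl, show reflect x 1 = x 1 from rfl] at h
  rw [abs_lt] at hx0 hy0
  have h0 : |-x 0 - y 0| ≤ 2 * r + 2 * σ := by rw [abs_le]; constructor <;> linarith
  linarith [abs_sub (x 1) (y 1)]

theorem dist_lt_of_mem_ball (hx : x ∈ ball (pt r 0) σ) (hy : y ∈ ball (pt r 0) σ) :
    dist x y < 2 * σ := by
  linarith [dist_triangle_right x y (pt r 0), mem_ball.1 hx, mem_ball.1 hy]

theorem G_ge (hσ : 0 < σ) (hσr : σ ≤ r / 2) (hx : x ∈ ball (pt r 0) σ)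
    (hy : y ∈ ball (pt r 0) σ) (hxy : x ≠ y) : log (r / (2 * σ)) / (2 * π) ≤ G x y := by
  have hdist := dist_pos.2 hxy
  have hr : 0 < r := by linarith
  rw [G, one_div_mul_eq_div]
  refine div_le_div_of_nonneg_right (log_le_log (by positivity) ?_) (by positivity)
  rw [div_le_div_iff₀ (by positivity) hdist]
  nlinarith [le_dist_reflect hσr hx hy, dist_lt_of_mem_ball hx hy]

theorem abs_G_le (hr : 0 < r) (hσr : σ ≤ r / 4) (hx : x ∈ ball (pt r 0) σ)
    (hy : y ∈ ball (pt r 0) σ) (hxy : x ≠ y) :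
    |G x y| ≤ (max |log r| |log (3 * r)| + |log (dist x y)|) / (2 * π) := by
  have hreg := le_dist_reflect (by linarith) hx hy
  rw [G, Real.log_div (by linarith) (dist_pos.2 hxy).ne', one_div_mul_eq_div, abs_div,
    abs_of_pos (by positivity : 0 < 2 * π)]
  gcongr
  refine (abs_sub _ _).trans (add_le_add_left (abs_le_max_abs_abs ?_ ?_) _)
  · exact log_le_log hr hreg
  · exact log_le_log (by linarith) (dist_reflect_le hσr hx hy)

theorem integrableOn_abs_log_dist (hx : x ∈ ball (pt r 0) σ) :
    IntegrableOn (fun y => |log (dist x y)|) (ball (pt r 0) σ) :=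
  ((integrableOn_ball_comp_dist volume (integrableOn_log_norm_ball volume (2 * σ)) x).mono_set
    fun _ hy => mem_ball'.2 (dist_lt_of_mem_ball hx hy)).abs

theorem integrableOn_G (hr : 0 < r) (hσr : σ ≤ r / 4) (hx : x ∈ ball (pt r 0) σ) :
    IntegrableOn (G x) (ball (pt r 0) σ) := by
  have hbound : IntegrableOn (fun y => (max |log r| |log (3 * r)| + |log (dist x y)|) / (2 * π))
      (ball (pt r 0) σ) :=
    ((integrableOn_const measure_ball_lt_top.ne).add (integrableOn_abs_log_dist hx)).div_const _
  refine hbound.mono' (measurable_G.comp measurable_prodMk_left).aestronglyMeasurable ?_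
  filter_upwards [ae_restrict_mem measurableSet_ball, ae_restrict_of_ae (Measure.ae_ne volume x)]
    with y hy hyx
  exact abs_G_le hr hσr hx hy hyx.symm

theorem abs_setIntegral_G_le (hr : 0 < r) (hσ : 0 < σ) (hσr : σ ≤ r / 4)
    (hx : x ∈ ball (pt r 0) σ) :
    |∫ y in ball (pt r 0) σ, G x y|
      ≤ (max |log r| |log (3 * r)| * (π * σ ^ 2) + ∫ y in ball (0 : Pt) (2 * σ), |log ‖y‖|)
        / (2 * π) := by
  have hlog := integrableOn_abs_log_dist hx
  have hK : IntegrableOn (fun _ : Pt => max |log r| |log (3 * r)|) (ball (pt r 0) σ) :=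
    integrableOn_const measure_ball_lt_top.ne
  calc |∫ y in ball (pt r 0) σ, G x y|
      ≤ ∫ y in ball (pt r 0) σ, (max |log r| |log (3 * r)| + |log (dist x y)|) / (2 * π) := by
        refine abs_integral_le_integral_abs.trans (setIntegral_mono_ae_restrict
          (integrableOn_G hr hσr hx).abs
          ((hK.add hlog).div_const _) ?_)
        filter_upwards [ae_restrict_mem measurableSet_ball,
          ae_restrict_of_ae (Measure.ae_ne volume x)] with y hy hyx
        exact abs_G_le hr hσr hx hy hyx.symm
    _ = (max |log r| |log (3 * r)| * (π * σ ^ 2) + ∫ y in ball (pt r 0) σ, |log (dist x y)|)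
          / (2 * π) := by
        rw [integral_div, integral_add hK hlog,
          setIntegral_const, measureReal_ball_pt _ hσ.le, smul_eq_mul, mul_comm]
    _ ≤ _ := by
        gcongr
        rw [← setIntegral_ball_comp_dist volume (fun t => |log t|) x]
        exact setIntegral_mono_set ((integrableOn_ball_comp_dist volume
          (integrableOn_log_norm_ball volume (2 * σ)) x).abs)
          (ae_of_all _ fun _ => abs_nonneg _)
          (ae_of_all _ fun y hy => mem_ball'.2 (dist_lt_of_mem_ball hx hy))

def patch (r σ c : ℝ) : Pt → ℝ := (ball (pt r 0) σ).indicator fun _ => c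

variable {c : ℝ}

theorem setIntegral_patch_mul {s : Set Pt} (hs : ball (pt r 0) σ ⊆ s) (h : Pt → ℝ) :
    ∫ x in s, patch r σ c x * h x = c * ∫ x in ball (pt r 0) σ, h x := by
  have : (fun x => patch r σ c x * h x) = (ball (pt r 0) σ).indicator fun x => c * h x := by
    ext x
    by_cases hx : x ∈ ball (pt r 0) σ <;> simp [patch, hx]
  rw [this, setIntegral_indicator measurableSet_ball, inter_eq_right.2 hs, integral_const_mul]

theorem Gop_patch (hσr : σ ≤ r) (x : Pt) :
    Gop (patch r σ c) x = c * ∫ y in ball (pt r 0) σ, G x y := by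
  rw [← setIntegral_patch_mul (ball_subset_halfPlane hσr), Gop]
  simp_rw [mul_comm (G x _)]

theorem Gop_patch_ge (hc : 0 ≤ c) (hσ : 0 < σ) (hσr : σ ≤ r / 4) (hx : x ∈ ball (pt r 0) σ) :
    log (r / (2 * σ)) / (2 * π) * (c * (π * σ ^ 2)) ≤ Gop (patch r σ c) x := by
  have hr : 0 < r := by linarith
  rw [Gop_patch (by linarith), mul_left_comm]
  refine mul_le_mul_of_nonneg_left ?_ hc
  calc log (r / (2 * σ)) / (2 * π) * (π * σ ^ 2)
      = ∫ _ in ball (pt r 0) σ, log (r / (2 * σ)) / (2 * π) := by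
        rw [setIntegral_const, measureReal_ball_pt _ hσ.le, smul_eq_mul, mul_comm]
    _ ≤ _ := by
        refine setIntegral_mono_ae_restrict (integrableOn_const measure_ball_lt_top.ne)
          (integrableOn_G hr hσr hx) ?_
        filter_upwards [ae_restrict_mem measurableSet_ball,
          ae_restrict_of_ae (Measure.ae_ne volume x)] with y hy hyx
        exact G_ge hσ (by linarith) hx hy hyx.symm

theorem integrableOn_Gop_patch (hr : 0 < r) (hσ : 0 < σ) (hσr : σ ≤ r / 4) :
    IntegrableOn (Gop (patch r σ c)) (ball (pt r 0) σ) := by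
  refine Measure.integrableOn_of_bounded measure_ball_lt_top.ne
    (stronglyMeasurable_Gop (measurable_const.indicator measurableSet_ball)).aestronglyMeasurable
    (M := |c| * ((max |log r| |log (3 * r)| * (π * σ ^ 2)
      + ∫ y in ball (0 : Pt) (2 * σ), |log ‖y‖|) / (2 * π))) ?_
  filter_upwards [ae_restrict_mem measurableSet_ball] with x hx
  rw [Real.norm_eq_abs, Gop_patch (by linarith), abs_mul]
  exact mul_le_mul_of_nonneg_left (abs_setIntegral_G_le hr hσ hσr hx) (abs_nonneg c)

theorem setIntegral_patch_mul_Gop_ge (hc : 0 ≤ c) (hσ : 0 < σ) (hσr : σ ≤ r / 4) (hσ1 : σ ≤ 1) :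
    log (r / (2 * σ)) / (2 * π) * (c * (π * σ ^ 2)) ^ 2
      ≤ ∫ x in Dset r, patch r σ c x * Gop (patch r σ c) x := by
  have hr : 0 < r := by linarith
  rw [setIntegral_patch_mul (ball_subset_Dset (by linarith) hσ1)]
  calc log (r / (2 * σ)) / (2 * π) * (c * (π * σ ^ 2)) ^ 2
      = c * ∫ _ in ball (pt r 0) σ, log (r / (2 * σ)) / (2 * π) * (c * (π * σ ^ 2)) := by
        rw [setIntegral_const, measureReal_ball_pt _ hσ.le, smul_eq_mul]
        ring
    _ ≤ _ := mul_le_mul_of_nonneg_left (setIntegral_mono_on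
        (integrableOn_const measure_ball_lt_top.ne) (integrableOn_Gop_patch hr hσ hσr)
        measurableSet_ball fun _ hx => Gop_patch_ge hc hσ hσr hx) hc

theorem setIntegral_coord_mul_patch_le (hc : 0 ≤ c) (hσ : 0 < σ) (hσr : σ ≤ r / 2) (hσ1 : σ ≤ 1) :
    ∫ x in Dset r, x 0 * patch r σ c x ≤ 2 * r * (c * (π * σ ^ 2)) := by
  rw [show (fun x : Pt => x 0 * patch r σ c x) = fun x => patch r σ c x * x 0 from
    funext fun _ => mul_comm _ _, setIntegral_patch_mul (ball_subset_Dset hσr hσ1)]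
  calc c * ∫ x in ball (pt r 0) σ, x 0 ≤ c * ∫ _ in ball (pt r 0) σ, 2 * r := by
        refine mul_le_mul_of_nonneg_left (setIntegral_mono_on ?_
          (integrableOn_const measure_ball_lt_top.ne) measurableSet_ball fun x hx => ?_) hc
        · exact ((by fun_prop : Continuous fun x : Pt => x 0).continuousOn.integrableOn_compact
            (isCompact_closedBall _ _)).mono_set ball_subset_closedBall
        · linarith [(abs_lt.1 (abs_sub_lt_of_mem_ball hx).1).2]
    _ = 2 * r * (c * (π * σ ^ 2)) := by
        rw [setIntegral_const, measureReal_ball_pt _ hσ.le, smul_eq_mul]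
        ring

theorem lintegral_Jconj_patch_le {g : ℝ → ℝ} (hg : Monotone g) (hg0 : ∀ s ≤ 0, g s = 0)
    {ε : ℝ} (hε : ε ≠ 0) (hc : ε ^ 2 * c = g 1) (hσ : 0 ≤ σ) :
    ENNReal.ofReal (ε⁻¹ ^ 2) * ∫⁻ x in Dset r, Jconj g (ε ^ 2 * patch r σ c x)
      ≤ ENNReal.ofReal (c * (π * σ ^ 2)) := by
  have hg1 : 0 ≤ g 1 := hg.nonneg_of_eq_zero_of_nonpos hg0 zero_le_one
  have hpt : ∀ x, Jconj g (ε ^ 2 * patch r σ c x)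
      ≤ (ball (pt r 0) σ).indicator (fun _ => ENNReal.ofReal (g 1)) x := by
    intro x
    by_cases hx : x ∈ ball (pt r 0) σ
    · simpa [patch, hx, hc] using Jconj_apply_one_le hg hg0
    · simp [patch, hx, Jconj_zero hg hg0]
  calc ENNReal.ofReal (ε⁻¹ ^ 2) * ∫⁻ x in Dset r, Jconj g (ε ^ 2 * patch r σ c x)
      ≤ ENNReal.ofReal (ε⁻¹ ^ 2)
          * ∫⁻ x, (ball (pt r 0) σ).indicator (fun _ => ENNReal.ofReal (g 1)) x :=
        mul_le_mul_right ((lintegral_mono hpt).trans (setLIntegral_le_lintegral _ _)) _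
    _ = ENNReal.ofReal (c * (π * σ ^ 2)) := by
        rw [lintegral_indicator_const measurableSet_ball, volume_ball_pt _ hσ,
          ← ENNReal.ofReal_mul hg1, ← ENNReal.ofReal_mul (by positivity), ← hc]
        congr 1
        field_simp

theorem setIntegral_halfPlane_patch (hσ : 0 ≤ σ) (hσr : σ ≤ r) :
    ∫ x in halfPlane, patch r σ c x = c * (π * σ ^ 2) := by
  simpa [setIntegral_const, measureReal_ball_pt _ hσ, mul_comm]
    using setIntegral_patch_mul (c := c) (ball_subset_halfPlane hσr) fun _ => 1

theorem inA_patch (hc : 0 ≤ c) (hσ : 0 ≤ σ) (hσr : σ ≤ r / 2) (hσ1 : σ ≤ 1) :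
    InA r (c * (π * σ ^ 2)) (patch r σ c) where
  measurable := measurable_const.indicator measurableSet_ball
  essBdd := ⟨c, ae_of_all _ fun x => by
    by_cases hx : x ∈ ball (pt r 0) σ <;> simp [patch, hx, abs_of_nonneg hc, hc]⟩
  nonneg := ae_of_all _ fun x => indicator_nonneg (fun _ _ => hc) x
  mass_le := (setIntegral_halfPlane_patch hσ (by linarith)).le
  support_ae := ae_of_all _ fun x hx =>
    indicator_of_notMem (fun h => hx (ball_subset_Dset hσr hσ1 h)) _

end Disc

theorem energy_patch_ge {g : ℝ → ℝ} (hg : Monotone g) (hg0 : ∀ s ≤ 0, g s = 0)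
    {r σ κ W ε c : ℝ} (hW : W = κ / (4 * π * r)) (hε : ε ≠ 0) (hc : ε ^ 2 * c = g 1)
    (hκ : c * (π * σ ^ 2) = κ) (hσ : 0 < σ) (hσr : σ ≤ r / 4) (hσ1 : σ ≤ 1) :
    ((κ ^ 2 / (4 * π) * log (r / (2 * σ)) - κ ^ 2 / (2 * π) - κ : ℝ) : EReal)
      ≤ energy g r W ε (patch r σ c) := by
  have hr : 0 < r := by linarith
  have hc0 : 0 ≤ c := nonneg_of_mul_nonneg_right
    (hc ▸ hg.nonneg_of_eq_zero_of_nonpos hg0 zero_le_one) (by positivity)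
  have hκ0 : 0 ≤ κ := hκ ▸ by positivity
  have hquad := setIntegral_patch_mul_Gop_ge hc0 hσ hσr hσ1
  have hmom := mul_le_mul_of_nonneg_left
    (setIntegral_coord_mul_patch_le (r := r) hc0 hσ (by linarith) hσ1) (hW ▸ by positivity : 0 ≤ W)
  have hW2 : W * (2 * r * κ) = κ ^ 2 / (2 * π) := by
    rw [hW]
    field_simp
    ring
  rw [hκ] at hquad hmom
  refine coe_sub_le_coe_sub_coe_ennreal hκ0 ?_ (hκ ▸ lintegral_Jconj_patch_le hg hg0 hε hc hσ.le)
  have hhalf : κ ^ 2 / (4 * π) * log (r / (2 * σ))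
      = 1 / 2 * (log (r / (2 * σ)) / (2 * π) * κ ^ 2) := by
    ring
  linarith

theorem statement_17_general
    (r κ W : ℝ) (hr : 0 < r) (hκ : 0 < κ) (hW : W = κ / (4 * π * r))
    (f : ℝ → ℝ) (hf : Monotone f) (hf1 : H1 f) :
    ∃ C > (0:ℝ), ∃ ε₀ > (0:ℝ), ∀ ρ : ℝ, 1 < ρ → ∀ ε : ℝ, 0 < ε → ε < ε₀ →
      ∀ ζ μ, IsTruncMax f r W κ ε ρ ζ μ →
        ((κ ^ 2 / (4 * π) * Real.log (1 / ε) - C : ℝ) : EReal) ≤ energy (ftr f ρ) r W ε ζ := by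
  have hf1pos : 0 < f 1 := hf1.2 1 one_pos
  set s₀ := √(κ / (π * f 1))
  have hs₀ : 0 < s₀ := by positivity
  refine ⟨κ ^ 2 / (4 * π) * |log (r / (2 * s₀))| + κ ^ 2 / (2 * π) + κ + 1, by positivity,
    min (r / 4) 1 / s₀, by positivity, fun ρ hρ ε hε hεε₀ ζ μ hζ => ?_⟩
  have hσr : ε * s₀ ≤ r / 4 := ((lt_div_iff₀ hs₀).1 hεε₀).le.trans (min_le_left _ _)
  have hσ1 : ε * s₀ ≤ 1 := ((lt_div_iff₀ hs₀).1 hεε₀).le.trans (min_le_right _ _)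
  have hmass : f 1 / ε ^ 2 * (π * (ε * s₀) ^ 2) = κ := by
    rw [mul_pow, Real.sq_sqrt (by positivity)]
    field_simp
  have hpatch := energy_patch_ge (ftr_monotone hf)
    (fun _ => ftr_of_nonpos (ρ := ρ) hf1 (by linarith)) hW hε.ne'
    (by rw [ftr_one hf hρ.le]; field_simp) hmass (by positivity) hσr hσ1
  have hadm := inA_patch (r := r) (c := f 1 / ε ^ 2) (by positivity) (by positivity)
    (by linarith) hσ1
  rw [hmass] at hadm
  refine le_trans ?_ (hpatch.trans (hζ.2.2.1 _ hadm))
  have hlog : log (r / (2 * (ε * s₀))) = log (r / (2 * s₀)) + log (1 / ε) := by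
    rw [← log_mul (by positivity) (by positivity)]
    congr 1
    field_simp
  rw [EReal.coe_le_coe_iff, hlog]
  nlinarith [neg_abs_le (log (r / (2 * s₀))), (by positivity : 0 ≤ κ ^ 2 / (4 * π))]

theorem statement_17
    (r κ W : ℝ) (hr : 0 < r) (hκ : 0 < κ) (hW : W = κ / (4 * π * r))
    (f : ℝ → ℝ) (hf : Monotone f) (hf1 : H1 f)
    (ϑ₀ ϑ₁ : ℝ) (hϑ₀ : 0 < ϑ₀) (hϑ₀' : ϑ₀ < 1) (hϑ₁ : 0 < ϑ₁)
    (hH2 : ∀ s, 0 ≤ s → Fint f s ≤ ϑ₀ * f s * s + ϑ₁ * f s)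
    (hH3 : Filter.liminf
      (fun s => f s * Real.exp (-(4 * π * min (2 * ϑ₀) (2 - 2 * ϑ₀) / κ) * s)) Filter.atTop = 0) :
    ∃ C > (0:ℝ), ∃ ε₀ > (0:ℝ), ∀ ρ : ℝ, 1 < ρ → ∀ ε : ℝ, 0 < ε → ε < ε₀ →
      ∀ ζ μ, IsTruncMax f r W κ ε ρ ζ μ →
        ((κ ^ 2 / (4 * π) * Real.log (1 / ε) - C : ℝ) : EReal) ≤ energy (ftr f ρ) r W ε ζ :=
  statement_17_general r κ W hr hκ hW f hf hf1
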